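/- Let (γ,w) be an (n,mn)-parking function (m ≥ 1) whose Dyck path γ contains a factor N E^p N with p > m. Then dinv(γ,w) ≥ m - 1. -/

import Mathlib

open scoped Classical

inductive Step : Type
  | N | E | D
deriving DecidableEq, Repr

instance : Fintype Step :=
  ⟨{Step.N, Step.E, Step.D}, by intro x; cases x <;> simp⟩

open Step

/-- number of occurrences of the letter `s` in the word `w` -/
def cnt (s : Step) (w : List Step) : ℕ := w.count s

/-- Schröder (or Dyck, if no `D`s) path in an `n × n` grid: every prefix has at
least as many `N`s as `E`s, and the totals agree. -/
def IsSchroeder (w : List Step) : Prop :=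
  (∀ p : List Step, p <+: w → cnt E p ≤ cnt N p) ∧ cnt N w = cnt E w

/-- words that are concatenations of blocks `NE` and `D` -/
inductive IsNED : List Step → Prop
  | nil : IsNED []
  | ne {w} : IsNED w → IsNED (N :: E :: w)
  | d {w} : IsNED w → IsNED (D :: w)

/-- area of a Schröder path: the number of lower triangles between the path and the
main diagonal, computed as the sum over `N` and `D` steps of the height
`#N - #E` of the starting point of the step above the diagonal. -/
def areaAux : ℕ → List Step → ℕ
  | _, [] => 0
  | h, N :: w => h + areaAux (h+1) w
  | h, D :: w => h + areaAux h w
  | h, E :: w => areaAux (h-1) w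

def area (w : List Step) : ℕ := areaAux 0 w

/-- area of an `N/E` lattice path in a rectangular grid: the number of boxes under
the path, i.e. the sum over `E` steps of the number of `N` steps before it. -/
def areaNEAux : ℕ → List Step → ℕ
  | _, [] => 0
  | h, N :: w => areaNEAux (h+1) w
  | h, E :: w => h + areaNEAux h w
  | h, D :: w => areaNEAux h w

def areaNE (w : List Step) : ℕ := areaNEAux 0 w

/-- number of `N`s occurring before the `(j+1)`-st `E` (`j` is 0-indexed);
this is the height of the path above the horizontal interval `[j, j+1]`. -/
def nBefore : List Step → ℕ → ℕ
  | [], _ => 0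
  | N :: w, j => 1 + nBefore w j
  | E :: w, j => if j = 0 then 0 else nBefore w (j-1)
  | D :: w, j => nBefore w j

/-- number of `E`s occurring before the `(i+1)`-st `N` (`i` is 0-indexed). -/
def eBefore : List Step → ℕ → ℕ
  | [], _ => 0
  | E :: w, i => 1 + eBefore w i
  | N :: w, i => if i = 0 then 0 else eBefore w (i-1)
  | D :: w, i => eBefore w i

/-- number of `D`s occurring after the `e`-th `E` (`e` is 1-indexed). -/
def dAfterE : List Step → ℕ → ℕ
  | [], _ => 0
  | E :: w, e => if e ≤ 1 then cnt D w else dAfterE w (e-1)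
  | D :: w, e => dAfterE w e
  | N :: w, e => dAfterE w e

/-- Combined computation of `bounce(Γ(γ)) + numph(γ)` along the bounce path of
`Γ(γ)`.  Here `g` is the Schröder path, `w = Γ(g)` is the underlying Dyck path,
`nn` its size; the bounce path has corners (peaks) at the positions
`j₀ = 0, jₖ₊₁ = nBefore w jₖ`; each intermediate return `jₖ₊₁ < nn` contributes
`nn - jₖ₊₁` to the bounce of `Γ(g)`, and the peak with corner at `jₖ` is the start
of the `(jₖ+1)`-st east step, contributing to numph the number of diagonal steps of
`g` above it, i.e. after that east step. -/
def bounceAux (g w : List Step) (nn : ℕ) : ℕ → ℕ → ℕ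
  | 0, _ => 0
  | fuel+1, j =>
      dAfterE g (j+1) +
        (if nn ≤ nBefore w j ∨ nBefore w j ≤ j then 0
         else (nn - nBefore w j) + bounceAux g w nn fuel (nBefore w j))

/-- the bounce statistic of a Schröder path: `bounce(Γ(γ)) + numph(γ)` -/
def bounce (g : List Step) : ℕ :=
  let w := g.filter (fun s => s ≠ D)
  let nn := cnt E w
  if nn = 0 then 0 else bounceAux g w nn g.length 0

/-- the (signed) area coordinate `a_i = m·i - (#E before the (i+1)-st N)` of line `i`
(0-indexed) for a path in an `n × mn` grid. -/
def aLine (m : ℕ) (g : List Step) (i : ℕ) : ℤ := (m : ℤ) * i - eBefore g i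

/-- an `(n, mn)`-Dyck path: `n` north steps, `mn` east steps, no diagonal steps,
staying weakly above the main diagonal. -/
def IsParkingPath (n m : ℕ) (g : List Step) : Prop :=
  (∀ s ∈ g, s ≠ D) ∧ cnt N g = n ∧ cnt E g = m * n ∧
    ∀ p : List Step, p <+: g → cnt E p ≤ m * cnt N p

/-- an `(n, mn)`-parking function: an `(n,mn)`-Dyck path labelled by a permutation
`w` of `{0, …, n-1}` whose labels increase within each column. -/
def IsParking (n m : ℕ) (g : List Step) (w : Fin n → Fin n) : Prop :=
  IsParkingPath n m g ∧ Function.Bijective w ∧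
    ∀ i j : Fin n, (j : ℕ) = (i : ℕ) + 1 → eBefore g (i : ℕ) = eBefore g (j : ℕ) → w i < w j

/-- the diagonal inversion statistic of an `(n, mn)`-parking function -/
def dinv (n m : ℕ) (g : List Step) (w : Fin n → Fin n) : ℤ :=
  ∑ i : Fin n, ∑ j : Fin n,
    if (i : ℕ) < (j : ℕ) then
      (if w i < w j then max 0 ((m : ℤ) - |aLine m g (i : ℕ) - aLine m g (j : ℕ)|) else 0) +
        (if w j < w i then max 0 ((m : ℤ) - |aLine m g (j : ℕ) - aLine m g (i : ℕ) + 1|) else 0)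
    else 0

/-- the number of descents of the word `w` -/
def desNum (n : ℕ) (w : Fin n → Fin n) : ℕ :=
  ((Finset.range (n-1)).filter fun i =>
    ∃ hj : i + 1 < n, w ⟨i+1, hj⟩ < w ⟨i, Nat.lt_of_succ_lt hj⟩).card

/-- the major index of the word `w` (with positions 1-indexed as usual) -/
def majStat (n : ℕ) (w : Fin n → Fin n) : ℕ :=
  ∑ i ∈ (Finset.range (n-1)).filter (fun i =>
    ∃ hj : i + 1 < n, w ⟨i+1, hj⟩ < w ⟨i, Nat.lt_of_succ_lt hj⟩), (i+1)

/-- the reading word of a labelled path in an `n × mn` grid: labels are read along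
diagonals parallel to the main diagonal, starting with the farthest diagonal,
each diagonal being read from top-right to bottom-left. -/
def readWord (n m : ℕ) (g : List Step) (lab : ℕ → ℕ) : List ℕ :=
  ((List.range (m * n + 1)).map fun k =>
    (((List.range n).reverse.filter fun i => aLine m g i = (m * n : ℤ) - k).map lab)).flatten

/-- the labelling function `ℕ → ℕ` associated to a permutation of `Fin n` -/
def labOf {n : ℕ} (w : Fin n → Fin n) : ℕ → ℕ :=
  fun i => if h : i < n then (w ⟨i, h⟩ : ℕ) else 0

/-- one step of the algorithm `φ`, on the reversed word: find the rightmost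
(i.e. first in the reversed word) east step not followed by an east step,
and swap it with the letter following it. -/
def phiRevAux : List Step → List Step
  | a :: E :: t => if a ≠ E then E :: a :: t else a :: phiRevAux (E :: t)
  | a :: t => a :: phiRevAux t
  | [] => []

/-- one step of the algorithm `φ` -/
def phiStep (w : List Step) : List Step := (phiRevAux w.reverse).reverse

/-- the sequence `φ(γ) = (γ₀, γ₁, …, γ_{bounce γ})` produced by the algorithm -/
def phiSeq (g : List Step) : List (List Step) :=
  (List.range (bounce g + 1)).map fun i => phiStep^[i] g

/-- the union of all sequences `φ(γ)` over area-0 Schröder paths with `n` blocks -/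
def phiUniv (n : ℕ) : Set (List Step) :=
  {p | ∃ g, IsNED g ∧ cnt N g + cnt D g = n ∧ p ∈ phiSeq g}

/-- the map replacing each block `NE` by `N` and each `D` by `E` -/
def theta : List Step → List Step
  | N :: E :: w => N :: theta w
  | D :: w => E :: theta w
  | _ :: w => theta w
  | [] => []

/-- the cells of the hook-shaped Young diagram `(d, 1^{n-d})` (row 0 is the arm). -/
def hookCells (n d : ℕ) : Finset (ℕ × ℕ) :=
  ((Finset.range d).image fun c => ((0 : ℕ), c)) ∪
    ((Finset.range (n - d + 1)).image fun r => (r, (0 : ℕ)))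

/-- a standard Young tableau of hook shape `(d, 1^{n-d})`: `pos i` is the cell
`(row, column)` containing the entry `i+1`; entries increase along rows and columns. -/
structure HookSYT (n d : ℕ) where
  pos : Fin n → ℕ × ℕ
  mem : ∀ i, pos i ∈ hookCells n d
  inj : Function.Injective pos
  rowInc : ∀ i j : Fin n, (pos i).1 = (pos j).1 → (pos i).2 < (pos j).2 → i < j
  colInc : ∀ i j : Fin n, (pos i).2 = (pos j).2 → (pos i).1 < (pos j).1 → i < j

/-- the descent set of a standard Young tableau: entries `i ∈ {1, …, n-1}` such that
the entry `i+1` lies in a strictly higher row than `i`. -/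
def Des {n d : ℕ} (τ : HookSYT n d) : Finset ℕ :=
  (Finset.Icc 1 (n-1)).filter fun i =>
    ∃ hi : i < n, ∃ hi' : i - 1 < n, (τ.pos ⟨i - 1, hi'⟩).1 < (τ.pos ⟨i, hi⟩).1

/-- the major index of a standard Young tableau -/
def majT {n d : ℕ} (τ : HookSYT n d) : ℕ := ∑ i ∈ Des τ, i

/-- the number of descents of a standard Young tableau -/
def desT {n d : ℕ} (τ : HookSYT n d) : ℕ := (Des τ).card

/-- the maximum of the descent set -/
def maxDes {n d : ℕ} (τ : HookSYT n d) : ℕ := (Des τ).sup id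

/-- the map `M_{n,d}`: the path `γ₁γ₂⋯γₙ` with `γₙ = NE`, `γ_{n-i} = NE` if
`i ∈ Des τ` and `γ_{n-i} = D` otherwise -/
def Mmap (n d : ℕ) (τ : HookSYT n d) : List Step :=
  (((List.range n).map fun j =>
    if j = n - 1 then [N, E]
    else if (n - 1 - j) ∈ Des τ then [N, E] else [D])).flatten

/-- the map `S_{n,d}`: the path `γ₁⋯γ_{n-1}` with `γ_{n-i} = NNEE` if
`i = max Des τ` and `1 ∈ Des τ`, `γ_{n-i} = NDE` if `i = max Des τ` and
`1 ∉ Des τ`, `γ_{n-i} = NE` if `i = 1` or `i ∈ Des τ ∖ {max Des τ}`, and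
`γ_{n-i} = D` otherwise. -/
def Smap (n d : ℕ) (τ : HookSYT n d) : List Step :=
  (((List.range (n-1)).map fun j =>
    if (n - 1 - j) = maxDes τ then (if 1 ∈ Des τ then [N,N,E,E] else [N,D,E])
    else if (n - 1 - j) = 1 ∨ (n - 1 - j) ∈ Des τ then [N,E] else [D])).flatten

/-- the set `V_{n,d}` of Schröder paths of the form `Dʲ NNEE u` or `Dʲ NDE u`
with `u ∈ {NE,D}* NE`, having `n-d+1` north steps and `d-1` diagonal steps. -/
def Vset (n d : ℕ) : Set (List Step) :=
  {g | (∃ j u, IsNED u ∧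
      (g = List.replicate j D ++ [N,N,E,E] ++ (u ++ [N,E]) ∨
       g = List.replicate j D ++ [N,D,E] ++ (u ++ [N,E]))) ∧
     cnt N g = n - d + 1 ∧ cnt D g = d - 1}

/-- Schröder paths in an `n × n` grid with `dd` diagonal steps, area `a`,
ending with `NE` -/
def SchT (n dd a : ℕ) : Set (List Step) :=
  {g | IsSchroeder g ∧ cnt D g = dd ∧ cnt N g = n - dd ∧ area g = a ∧ ∃ u, g = u ++ [N, E]}

/-- the 'upper' forms: `Dʲ NNEE γ' NE NE` or `γ' NE Dʲ NNEE γ''` -/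
def UpperForm (g : List Step) : Prop :=
  (∃ j u, IsNED u ∧ g = List.replicate j D ++ [N,N,E,E] ++ u ++ [N,E,N,E]) ∨
  (∃ u j v, IsNED u ∧ g = u ++ [N,E] ++ List.replicate j D ++ [N,N,E,E] ++ v)

/-- the 'lower' forms: `Dʲ NNEE γ' D NE` or `γ' NDE Dʲ NE γ''` -/
def LowerForm (g : List Step) : Prop :=
  (∃ j u, IsNED u ∧ g = List.replicate j D ++ [N,N,E,E] ++ u ++ [D,N,E]) ∨
  (∃ u j v, IsNED u ∧ g = u ++ [N,D,E] ++ List.replicate j D ++ [N,E] ++ v)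

/-- the number of distinct columns of the path -/
def Tcols (n : ℕ) (g : List Step) : ℕ :=
  ((Finset.range n).image fun i => eBefore g i).card

/-- the `q`-integer `[k]_q = 1 + q + ⋯ + q^{k-1}` as a polynomial -/
noncomputable def qInt (k : ℕ) : Polynomial ℤ := ∑ i ∈ Finset.range k, Polynomial.X ^ i

/-- the `q`-factorial `[k]!_q` -/
noncomputable def qFact (k : ℕ) : Polynomial ℤ := ∏ i ∈ Finset.range k, qInt (i+1)

/-!
Write `a_j` for the area coordinate of line `j`. The factor `N E^p N` makes the coordinate drop
by `p - m > 0` from line `k` to line `k + 1`, while `a_0 ≤ 0 ≤ a_{k+1}`. Hence two consecutive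
lines `i < i + 1 ≤ k` straddle the value `a_{k+1}`: `a_i ≤ a_{k+1} < a_{i+1}`. With
`d = a_{k+1} - a_i` and `d' = a_{i+1} - a_{k+1}`, whatever the labels, the pairs `(i, k + 1)` and
`(i + 1, k + 1)` contribute at least `m - d - 1` and `m - d'` to `dinv`, and `d + d' ≤ m` because
a coordinate grows by at most `m` from one line to the next.
-/

theorem eBefore_le_succ (g : List Step) (j : ℕ) : eBefore g j ≤ eBefore g (j + 1) := by
  induction g generalizing j with
  | nil => simp [eBefore]
  | cons a t ih => cases a <;> cases j <;> simp [eBefore, ih]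

theorem eBefore_replicate_E_append (p : ℕ) (t : List Step) (j : ℕ) :
    eBefore (List.replicate p E ++ t) j = p + eBefore t j := by
  induction p with
  | zero => simp
  | succ p ih => simp [List.replicate_succ, eBefore, ih]; omega

theorem eBefore_append (u t : List Step) {j : ℕ} (hj : cnt N u ≤ j) :
    eBefore (u ++ t) j = cnt E u + eBefore t (j - cnt N u) := by
  induction u generalizing j with
  | nil => simp [cnt]
  | cons a u ih =>
    cases a with
    | N =>
      obtain ⟨j, rfl⟩ : ∃ j', j = j' + 1 :=
        Nat.exists_eq_add_one.mpr (by simp [cnt] at hj; omega)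
      have := ih (j := j) (by simp [cnt] at hj ⊢; omega)
      simp only [cnt] at this ⊢
      simp [eBefore, this, Nat.add_sub_add_right]
    | E =>
      have := ih (j := j) (by simpa [cnt] using hj)
      simp only [cnt] at this ⊢
      simp [eBefore, this]; omega
    | D =>
      have := ih (j := j) (by simpa [cnt] using hj)
      simp only [cnt] at this ⊢
      simp [eBefore, this]

theorem eBefore_factor_left (u v : List Step) (p : ℕ) :
    eBefore (u ++ N :: (List.replicate p E ++ N :: v)) (cnt N u) = cnt E u := by
  simp [eBefore_append u _ le_rfl, eBefore]

theorem eBefore_factor_right (u v : List Step) (p : ℕ) :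
    eBefore (u ++ N :: (List.replicate p E ++ N :: v)) (cnt N u + 1) = cnt E u + p := by
  simp [eBefore_append u _ (Nat.le_succ _), eBefore, eBefore_replicate_E_append]

theorem aLine_zero_nonpos (m : ℕ) (g : List Step) : aLine m g 0 ≤ 0 := by
  simp [aLine]

theorem aLine_succ_le (m : ℕ) (g : List Step) (j : ℕ) :
    aLine m g (j + 1) ≤ aLine m g j + m := by
  have := eBefore_le_succ g j
  simp only [aLine]
  push_cast
  linarith

theorem exists_le_lt_succ_of_le_of_lt {α : Type*} [LinearOrder α] {a : ℕ → α} {c : α}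
    {k : ℕ} (h0 : a 0 ≤ c) (hk : c < a k) : ∃ i < k, a i ≤ c ∧ c < a (i + 1) := by
  induction k with
  | zero => exact absurd hk (not_lt.mpr h0)
  | succ k ih =>
    by_cases hck : c < a k
    · obtain ⟨i, hik, hi⟩ := ih hck
      exact ⟨i, hik.trans (Nat.lt_succ_self k), hi⟩
    · exact ⟨k, Nat.lt_succ_self k, not_lt.mp hck, hk⟩

section dinv

variable {n : ℕ} (m : ℕ) (g : List Step) (w : Fin n → Fin n)

def dinvPair (i j : Fin n) : ℤ :=
  if (i : ℕ) < (j : ℕ) then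
    (if w i < w j then max 0 ((m : ℤ) - |aLine m g (i : ℕ) - aLine m g (j : ℕ)|) else 0) +
      (if w j < w i then max 0 ((m : ℤ) - |aLine m g (j : ℕ) - aLine m g (i : ℕ) + 1|) else 0)
  else 0

theorem dinv_eq_sum_dinvPair : dinv n m g w = ∑ i, ∑ j, dinvPair m g w i j := rfl

theorem dinvPair_nonneg (i j : Fin n) : 0 ≤ dinvPair m g w i j := by
  unfold dinvPair
  split_ifs <;> positivity

theorem sub_max_le_dinvPair {i j : Fin n} (hij : (i : ℕ) < j) (hw : w i ≠ w j) :
    (m : ℤ) - max |aLine m g i - aLine m g j| |aLine m g j - aLine m g i + 1| ≤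
      dinvPair m g w i j := by
  unfold dinvPair
  rw [if_pos hij]
  rcases hw.lt_or_gt with h | h
  · simp only [if_pos h, if_neg h.not_gt, add_zero]
    exact (sub_le_sub_left (le_max_left _ _) _).trans (le_max_right _ _)
  · simp only [if_pos h, if_neg h.not_gt, zero_add]
    exact (sub_le_sub_left (le_max_right _ _) _).trans (le_max_right _ _)

theorem dinvPair_add_le_dinv {i j : Fin n} (hij : i ≠ j) (k : Fin n) :
    dinvPair m g w i k + dinvPair m g w j k ≤ dinv n m g w := by
  have hrow (r : Fin n) : dinvPair m g w r k ≤ ∑ l, dinvPair m g w r l :=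
    Finset.single_le_sum (fun l _ => dinvPair_nonneg m g w r l) (Finset.mem_univ k)
  rw [dinv_eq_sum_dinvPair]
  refine (add_le_add (hrow i) (hrow j)).trans ?_
  exact Finset.add_le_sum (fun r _ => Finset.sum_nonneg fun l _ => dinvPair_nonneg m g w r l)
    (Finset.mem_univ i) (Finset.mem_univ j) hij

variable {m g w}

theorem sub_one_le_dinv_of_straddle (hw : Function.Injective w) {i k : ℕ} (hik : i + 1 < k)
    (hk : k < n) (hle : aLine m g i ≤ aLine m g k) (hlt : aLine m g k < aLine m g (i + 1)) :
    (m : ℤ) - 1 ≤ dinv n m g w := by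
  let r : Fin n := ⟨i, by omega⟩
  let s : Fin n := ⟨i + 1, by omega⟩
  let t : Fin n := ⟨k, hk⟩
  have hr : (m : ℤ) - (aLine m g k - aLine m g i + 1) ≤ dinvPair m g w r t := by
    refine le_trans ?_
      (sub_max_le_dinvPair m g w (show i < k by omega) (hw.ne (by simp [r, t]; omega)))
    refine sub_le_sub_left (max_le ?_ ?_) _ <;> rw [abs_le] <;> constructor <;> linarith
  have hs : (m : ℤ) - (aLine m g (i + 1) - aLine m g k) ≤ dinvPair m g w s t := by
    refine le_trans ?_
      (sub_max_le_dinvPair m g w (show i + 1 < k from hik) (hw.ne (by simp [s, t]; omega)))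
    refine sub_le_sub_left (max_le ?_ ?_) _ <;> rw [abs_le] <;> constructor <;> linarith
  have hsum := dinvPair_add_le_dinv m g w (show r ≠ s by simp [r, s]) t
  have hstep := aLine_succ_le m g i
  linarith

end dinv

theorem stmt8_general (n m : ℕ) (g : List Step) (w : Fin n → Fin n)
    (hpark : IsParking n m g w) (p : ℕ) (hpm : m < p)
    (hfac : ∃ u v : List Step,
      g = u ++ Step.N :: (List.replicate p Step.E ++ Step.N :: v)) :
    (m : ℤ) - 1 ≤ dinv n m g w := by
  obtain ⟨u, v, hg⟩ := hfac
  obtain ⟨⟨-, hcountN, -, hprefix⟩, ⟨hw, -⟩, -⟩ := hpark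
  have hleft : eBefore g (cnt N u) = cnt E u := hg ▸ eBefore_factor_left u v p
  have hright : eBefore g (cnt N u + 1) = cnt E u + p := hg ▸ eBefore_factor_right u v p
  have hkn : cnt N u + 1 < n := by
    rw [← hcountN, hg]
    simp [cnt, List.count_append, List.count_replicate]
  have hbelow : cnt E u + p ≤ m * (cnt N u + 1) := by
    simpa [cnt, List.count_append, List.count_replicate] using
      hprefix (u ++ N :: List.replicate p E) ⟨N :: v, by simp [hg]⟩
  have hnonneg : 0 ≤ aLine m g (cnt N u + 1) := by
    simp only [aLine, hright, sub_nonneg]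
    exact_mod_cast hbelow
  have hdrop : aLine m g (cnt N u + 1) < aLine m g (cnt N u) := by
    simp only [aLine, hleft, hright]
    push_cast
    linarith [show (m : ℤ) < p by exact_mod_cast hpm]
  obtain ⟨i, hik, hle, hlt⟩ :=
    exists_le_lt_succ_of_le_of_lt ((aLine_zero_nonpos m g).trans hnonneg) hdrop
  exact sub_one_le_dinv_of_straddle hw (by omega) hkn hle hlt

/-- If the Dyck path of an `(n,mn)`-parking function contains a factor
`N E^p N` with `p > m`, then `dinv(γ,w) ≥ m - 1`. -/
theorem stmt8 (n m : ℕ) (hm : 1 ≤ m) (g : List Step) (w : Fin n → Fin n)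
    (hpark : IsParking n m g w) (p : ℕ) (hpm : m < p)
    (hfac : ∃ u v : List Step,
      g = u ++ Step.N :: (List.replicate p Step.E ++ Step.N :: v)) :
    (m : ℤ) - 1 ≤ dinv n m g w :=
  stmt8_general n m g w hpark p hpm hfac
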